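/- arXiv:2403.17962 — 5 statements merged into one kernel-verified Lean document; each statement's English description precedes it below -/
import Mathlib

section
/- If A is an n×n X-matrix over a field K with det A ≠ 0, then its inverse A⁻¹ is also an X-matrix. Equivalently, the units of the ring of X-matrices are exactly the X-matrices that are invertible in the full matrix ring: 𝒳^× = GL(n,K) ∩ 𝒳. -/
/-!
The inverse of an invertible matrix `A` over a field is a polynomial in `A`: the algebra `K[A]`
is finite-dimensional, hence Artinian, and in an Artinian ring every non-zero-divisor is a unit.
X-matrices are closed under products, so they form a subalgebra containing `K[A]`, and hence
`A⁻¹`.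
-/

open Matrix

/-- An `n × n` matrix is an X-matrix if every entry off the diagonal and off the
anti-diagonal (1-based: `i ≠ j` and `i + j ≠ n + 1`) vanishes. -/
def IsXMatrix {n : ℕ} {K : Type*} [Zero K] (A : Matrix (Fin n) (Fin n) K) : Prop :=
  ∀ i j : Fin n, i ≠ j → j ≠ i.rev → A i j = 0

open Algebra nonZeroDivisors in
theorem IsIntegral.ringInverse_mem_adjoin {K R : Type*} [Field K] [Ring R] [Algebra K R]
    {x : R} (hx : IsIntegral K x) : Ring.inverse x ∈ K[x] := by
  by_cases hunit : IsUnit x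
  swap
  · rw [Ring.inverse_non_unit x hunit]
    exact zero_mem _
  have : Module.Finite K K[x] := finite_adjoin_simple_of_isIntegral hx
  have : IsArtinianRing K[x] := isArtinian_of_tower K inferInstance
  have hx' : (x : K[x]) ∈ K[x]⁰ :=
    comap_nonZeroDivisors_le_of_injective (f := K[x].val) Subtype.val_injective
      hunit.mem_nonZeroDivisors
  obtain ⟨u, hu⟩ := IsArtinianRing.isUnit_of_mem_nonZeroDivisors hx'
  have hinv : Ring.inverse x = ((u⁻¹ : K[x]ˣ) : K[x]) := by
    simpa [hu] using Ring.inverse_unit (Units.map K[x].val.toMonoidHom u)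
  rw [hinv]
  exact SetLike.coe_mem _

namespace IsXMatrix

variable {n : ℕ} {K : Type*}

theorem eq_or_eq_rev_of_ne_zero [Zero K] {A : Matrix (Fin n) (Fin n) K} (hA : IsXMatrix A)
    {i j : Fin n} (hij : A i j ≠ 0) : j = i ∨ j = i.rev := by
  by_contra! h
  exact hij (hA i j (Ne.symm h.1) h.2)

theorem mul [NonUnitalNonAssocSemiring K] {A B : Matrix (Fin n) (Fin n) K}
    (hA : IsXMatrix A) (hB : IsXMatrix B) : IsXMatrix (A * B) := by
  intro i j hij hrev
  rw [mul_apply]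
  refine Finset.sum_eq_zero fun k _ => ?_
  by_contra hk
  have hik := hA.eq_or_eq_rev_of_ne_zero (left_ne_zero_of_mul hk)
  have hkj := hB.eq_or_eq_rev_of_ne_zero (right_ne_zero_of_mul hk)
  rcases hik with rfl | rfl <;> rcases hkj with rfl | rfl <;> simp_all

end IsXMatrix

def xMatrixSubalgebra (n : ℕ) (K : Type*) [CommSemiring K] :
    Subalgebra K (Matrix (Fin n) (Fin n) K) where
  carrier := {A | IsXMatrix A}
  mul_mem' := IsXMatrix.mul
  add_mem' hA hB i j hij hrev := by
    simp [hA i j hij hrev, hB i j hij hrev]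
  algebraMap_mem' _ _ _ hij _ := diagonal_apply_ne _ hij

/-- If an X-matrix has nonzero determinant then its inverse is again an X-matrix;
equivalently, the units of the ring of X-matrices are exactly the invertible
X-matrices: any invertible X-matrix has a two-sided inverse inside the X-matrices. -/
theorem isXMatrix_inv {n : ℕ} {K : Type*} [Field K]
    (A : Matrix (Fin n) (Fin n) K) (hA : IsXMatrix A) (hdet : A.det ≠ 0) :
    IsXMatrix A⁻¹ ∧ A * A⁻¹ = 1 ∧ A⁻¹ * A = 1 := by
  have hu : IsUnit A.det := isUnit_iff_ne_zero.mpr hdet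
  refine ⟨?_, mul_nonsing_inv A hu, nonsing_inv_mul A hu⟩
  have hadjoin : Algebra.adjoin K {A} ≤ xMatrixSubalgebra n K :=
    Algebra.adjoin_singleton_le hA
  rw [nonsing_inv_eq_ringInverse]
  exact hadjoin (Algebra.IsIntegral.isIntegral A).ringInverse_mem_adjoin
end

section
/- Let A = D + E J be an n×n X-matrix over a field K, where D and E are diagonal matrices and J is the anti-identity matrix. Assume D is invertible and set F = D⁻¹ E (a diagonal matrix). If I − F F^⊼ is invertible, then A is invertible and A⁻¹ = (I − F F^⊼)⁻¹ (I − F J) D⁻¹. -/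
open Matrix

/-- The anti-transpose of a matrix: `(A^⊼)_{i,j} = a_{n-j+1, n-i+1}` (1-based),
i.e. with 0-based indices `(A^⊼) i j = A j.rev i.rev`. -/
def antiTranspose {n : ℕ} {K : Type*} (A : Matrix (Fin n) (Fin n) K) :
    Matrix (Fin n) (Fin n) K :=
  Matrix.of fun i j => A j.rev i.rev

/-- The anti-identity (exchange) matrix `J`, with `J_{i,j} = 1` iff `i + j = n + 1`
(1-based), i.e. `j = i.rev` with 0-based indices. -/
def antiIdentity (n : ℕ) (K : Type*) [Zero K] [One K] : Matrix (Fin n) (Fin n) K :=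
  Matrix.of fun i j => if j = i.rev then 1 else 0

lemma mul_antiIdentity_apply {n : ℕ} {K : Type*} [NonAssocSemiring K]
    (M : Matrix (Fin n) (Fin n) K) (i j : Fin n) :
    (M * antiIdentity n K) i j = M i j.rev := by
  simp only [Matrix.mul_apply, antiIdentity, Matrix.of_apply, mul_ite, mul_one, mul_zero]
  rw [Finset.sum_eq_single j.rev]
  · simp
  · intro k _ hk
    rw [if_neg]
    intro h
    exact hk (by rw [← Fin.rev_rev k, h, Fin.rev_rev])
  · simp

lemma isDiag_mul {n : ℕ} {K : Type*} [NonUnitalNonAssocSemiring K]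
    {A B : Matrix (Fin n) (Fin n) K} (hA : A.IsDiag) (hB : B.IsDiag) :
    (A * B).IsDiag := by
  intro i j hij
  rw [Matrix.mul_apply]
  apply Finset.sum_eq_zero
  intro k _
  rcases eq_or_ne k i with rfl | hk
  · rw [hB hij, mul_zero]
  · rw [hA (Ne.symm hk), zero_mul]

lemma diag_key {n : ℕ} {K : Type*} [Field K]
    {F : Matrix (Fin n) (Fin n) K} (hF : F.IsDiag) :
    F * antiIdentity n K * (F * antiIdentity n K) = F * antiTranspose F := by
  ext i j
  rw [Matrix.mul_apply]
  simp only [mul_antiIdentity_apply]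
  rw [Finset.sum_eq_single i.rev]
  · rw [Matrix.mul_apply, Finset.sum_eq_single i, Fin.rev_rev]
    · rcases eq_or_ne i j with rfl | hij
      · simp [antiTranspose]
      · rw [show F i.rev j.rev = 0 from hF (fun h => hij (Fin.rev_injective h)),
          show (antiTranspose F) i j = 0 from hF (fun h => hij (Fin.rev_injective h.symm)),
          mul_zero]
    · intro k _ hk
      rw [hF (Ne.symm hk), zero_mul]
    · simp
  · intro k _ hk
    rw [show F i k.rev = 0 from hF (fun h => hk (by rw [h, Fin.rev_rev])), zero_mul]
  · simp

/-- For an X-matrix `A = D + E J` with `D` invertible diagonal, `E` diagonal and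
`F = D⁻¹ E`, if `I - F F^⊼` is invertible then `A` is invertible with
`A⁻¹ = (I - F F^⊼)⁻¹ (I - F J) D⁻¹`. -/
theorem inv_xMatrix_formula {n : ℕ} {K : Type*} [Field K]
    (D E F A : Matrix (Fin n) (Fin n) K)
    (hD : D.IsDiag) (hE : E.IsDiag)
    (hA : A = D + E * antiIdentity n K)
    (hDinv : IsUnit D.det)
    (hF : F = D⁻¹ * E)
    (hFinv : IsUnit (1 - F * antiTranspose F).det) :
    IsUnit A.det ∧
      A⁻¹ = (1 - F * antiTranspose F)⁻¹ * (1 - F * antiIdentity n K) * D⁻¹ := by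
  have hDinvDiag : (D⁻¹).IsDiag := by
    rw [← hD.diagonal_diag, Matrix.inv_diagonal]
    exact Matrix.isDiag_diagonal _
  have hFdiag : F.IsDiag := hF ▸ isDiag_mul hDinvDiag hE
  have hDF : D * F = E := by
    rw [hF, ← mul_assoc, Matrix.mul_nonsing_inv D hDinv, one_mul]
  have hAfact : A = D * (1 + F * antiIdentity n K) := by
    rw [hA, mul_add, mul_one, ← mul_assoc, hDF]
  have hkey : (1 - F * antiIdentity n K) * (1 + F * antiIdentity n K)
      = 1 - F * antiTranspose F := by
    rw [sub_mul, one_mul, mul_add (F * antiIdentity n K), mul_one, diag_key hFdiag]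
    abel
  have hBA : (1 - F * antiTranspose F)⁻¹ * (1 - F * antiIdentity n K) * D⁻¹ * A = 1 := by
    rw [hAfact, mul_assoc _ D⁻¹, ← mul_assoc D⁻¹, Matrix.nonsing_inv_mul D hDinv, one_mul,
      mul_assoc, hkey, Matrix.nonsing_inv_mul _ hFinv]
  exact ⟨Matrix.isUnit_det_of_left_inverse hBA, Matrix.inv_eq_left_inv hBA⟩
end

section
/- The set 𝒳^b of bi-symmetric X-matrices is a commutative subring of the n×n matrices over a field K: it contains the zero and identity matrices, is closed under addition, negation, and multiplication, and any two bi-symmetric X-matrices A, B satisfy A B = B A. -/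
open Matrix

/-- An X-matrix is bi-symmetric if it is invariant under both transposition and
anti-transposition. -/
def IsBiSymXMatrix {n : ℕ} {K : Type*} [Zero K] (A : Matrix (Fin n) (Fin n) K) : Prop :=
  IsXMatrix A ∧ A = Aᵀ ∧ A = antiTranspose A

section Aux

variable {n : ℕ} {K : Type*} [Field K]

lemma antiTranspose_eq {K : Type*} {A : Matrix (Fin n) (Fin n) K} :
    antiTranspose A = (Aᵀ).submatrix Fin.rev Fin.rev := rfl

lemma aT_mul (A B : Matrix (Fin n) (Fin n) K) :
    antiTranspose (A * B) = antiTranspose B * antiTranspose A := by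
  rw [antiTranspose_eq, antiTranspose_eq, antiTranspose_eq, Matrix.transpose_mul]
  exact (Matrix.submatrix_mul_equiv Bᵀ Aᵀ Fin.rev Fin.revPerm Fin.rev).symm

lemma mulX_sum {A B : Matrix (Fin n) (Fin n) K} (hA : IsXMatrix A) (i j : Fin n) :
    (A * B) i j = ∑ k ∈ ({i, i.rev} : Finset (Fin n)), A i k * B k j := by
  rw [Matrix.mul_apply]
  symm
  apply Finset.sum_subset (Finset.subset_univ _)
  intro k _ hk
  simp only [Finset.mem_insert, Finset.mem_singleton, not_or] at hk
  rw [hA i k (Ne.symm hk.1) hk.2, zero_mul]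

lemma comm_aux {A B : Matrix (Fin n) (Fin n) K}
    (hA : IsBiSymXMatrix A) (hB : IsBiSymXMatrix B) : A * B = B * A := by
  obtain ⟨hAX, hAT, hAaT⟩ := hA
  obtain ⟨hBX, hBT, hBaT⟩ := hB
  have hAs : ∀ i j, A j i = A i j := fun i j => congrFun (congrFun hAT j) i
  have hBs : ∀ i j, B j i = B i j := fun i j => congrFun (congrFun hBT j) i
  have hAd : ∀ i : Fin n, A i.rev i.rev = A i i :=
    fun i => (congrFun (congrFun hAaT i) i).symm
  have hBd : ∀ i : Fin n, B i.rev i.rev = B i i :=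
    fun i => (congrFun (congrFun hBaT i) i).symm
  ext i j
  rw [mulX_sum hAX, mulX_sum hBX]
  by_cases hir : i = i.rev
  · rw [← hir]
    rw [Finset.insert_eq_self.2 (Finset.mem_singleton_self i), Finset.sum_singleton,
      Finset.sum_singleton]
    by_cases hij : i = j
    · subst hij; ring
    · rw [hAX i j hij (fun h => hij (hir.trans h.symm)),
        hBX i j hij (fun h => hij (hir.trans h.symm))]
      ring
  · rw [Finset.sum_pair hir, Finset.sum_pair hir]
    by_cases hij : i = j
    · subst hij
      rw [hAs i.rev i, hBs i.rev i]; ring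
    · by_cases hji : j = i.rev
      · subst hji
        rw [hAd, hBd]; ring
      · rw [hAX i j hij hji, hBX i j hij hji,
          hAX i.rev j (Ne.symm hji) (by rw [Fin.rev_rev]; exact Ne.symm hij),
          hBX i.rev j (Ne.symm hji) (by rw [Fin.rev_rev]; exact Ne.symm hij)]
        ring

end Aux

/-- The bi-symmetric X-matrices form a commutative subring of `Mat(n, K)`: they contain
`0` and `1`, are closed under addition, negation and multiplication, and multiplication
of bi-symmetric X-matrices is commutative. -/
theorem biSymXMatrices_commutative_subring {n : ℕ} (K : Type*) [Field K] :
    IsBiSymXMatrix (0 : Matrix (Fin n) (Fin n) K) ∧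
    IsBiSymXMatrix (1 : Matrix (Fin n) (Fin n) K) ∧
    (∀ A B : Matrix (Fin n) (Fin n) K,
      IsBiSymXMatrix A → IsBiSymXMatrix B → IsBiSymXMatrix (A + B)) ∧
    (∀ A : Matrix (Fin n) (Fin n) K, IsBiSymXMatrix A → IsBiSymXMatrix (-A)) ∧
    (∀ A B : Matrix (Fin n) (Fin n) K,
      IsBiSymXMatrix A → IsBiSymXMatrix B → IsBiSymXMatrix (A * B)) ∧
    (∀ A B : Matrix (Fin n) (Fin n) K,
      IsBiSymXMatrix A → IsBiSymXMatrix B → A * B = B * A) := by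
  refine ⟨⟨fun i j _ _ => rfl, Matrix.transpose_zero.symm, rfl⟩,
    ⟨fun i j hij _ => Matrix.one_apply_ne hij, Matrix.transpose_one.symm, by
      rw [antiTranspose_eq, Matrix.transpose_one,
        show (Fin.rev : Fin n → Fin n) = ⇑(Fin.revPerm) from rfl,
        Matrix.submatrix_one_equiv]⟩,
    fun A B hA hB => ⟨fun i j h1 h2 => by
        show A i j + B i j = 0
        rw [hA.1 i j h1 h2, hB.1 i j h1 h2, add_zero],
      by rw [Matrix.transpose_add, ← hA.2.1, ← hB.2.1],
      by
        ext i j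
        show A i j + B i j = (A + B) j.rev i.rev
        rw [congrFun (congrFun hA.2.2 i) j, congrFun (congrFun hB.2.2 i) j]; rfl⟩,
    fun A hA => ⟨fun i j h1 h2 => by
        show -(A i j) = 0
        rw [hA.1 i j h1 h2, neg_zero],
      by rw [Matrix.transpose_neg, ← hA.2.1],
      by
        ext i j
        show -(A i j) = -(A j.rev i.rev)
        rw [congrFun (congrFun hA.2.2 i) j]; rfl⟩,
    fun A B hA hB => ⟨fun i j h1 h2 => by
        rw [mulX_sum hA.1, Finset.sum_insert_of_eq_zero_if_notMem, Finset.sum_singleton]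
        · rw [hB.1 i.rev j (Ne.symm h2) (by rw [Fin.rev_rev]; exact Ne.symm h1), mul_zero]
        · intro _
          rw [hB.1 i j h1 h2, mul_zero],
      by
        conv_lhs => rw [comm_aux hA hB]
        rw [Matrix.transpose_mul, ← hA.2.1, ← hB.2.1],
      by
        rw [aT_mul, ← hA.2.2, ← hB.2.2, comm_aux hA hB]⟩,
    fun A B hA hB => comm_aux hA hB⟩
end

section
/- If A is an invertible bi-symmetric X-matrix over a field K, then A⁻¹ is also a bi-symmetric X-matrix. Equivalently, (𝒳^b)^× = GL(n,K) ∩ 𝒳^b. -/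
open Matrix

section Aux

variable {n : ℕ} {K : Type*} [Field K]

/-- The exchange (reversal) permutation matrix. -/
def revMat (n : ℕ) (K : Type*) [Field K] : Matrix (Fin n) (Fin n) K :=
  Matrix.of fun i j => if i = j.rev then 1 else 0

lemma revMat_mul (M : Matrix (Fin n) (Fin n) K) :
    revMat n K * M = Matrix.of fun i j => M i.rev j := by
  ext i j
  simp only [Matrix.mul_apply, revMat, Matrix.of_apply]
  rw [Finset.sum_eq_single i.rev]
  · simp
  · intro k _ hk
    rw [if_neg, zero_mul]
    intro h
    exact hk (by rw [h, Fin.rev_rev])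
  · simp

lemma mul_revMat (M : Matrix (Fin n) (Fin n) K) :
    M * revMat n K = Matrix.of fun i j => M i j.rev := by
  ext i j
  simp only [Matrix.mul_apply, revMat, Matrix.of_apply]
  rw [Finset.sum_eq_single j.rev]
  · simp [Fin.rev_rev]
  · intro k _ hk
    rw [if_neg, mul_zero]
    intro h
    exact hk h
  · simp

lemma revMat_mul_revMat : revMat n K * revMat n K = 1 := by
  rw [mul_revMat]
  ext i j
  simp only [Matrix.of_apply, revMat, Fin.rev_rev, Matrix.one_apply]

lemma antiTranspose_eq_s15 (M : Matrix (Fin n) (Fin n) K) :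
    antiTranspose M = revMat n K * Mᵀ * revMat n K := by
  rw [revMat_mul, mul_revMat]
  ext i j
  simp [antiTranspose]

lemma isXMatrix_one : IsXMatrix (1 : Matrix (Fin n) (Fin n) K) := by
  intro i j hij _
  exact Matrix.one_apply_ne hij

lemma isXMatrix_add {M N : Matrix (Fin n) (Fin n) K} (hM : IsXMatrix M) (hN : IsXMatrix N) :
    IsXMatrix (M + N) := by
  intro i j h1 h2
  simp [hM i j h1 h2, hN i j h1 h2]

lemma isXMatrix_smul {c : K} {M : Matrix (Fin n) (Fin n) K} (hM : IsXMatrix M) :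
    IsXMatrix (c • M) := by
  intro i j h1 h2
  simp [hM i j h1 h2]

lemma isXMatrix_mul {M N : Matrix (Fin n) (Fin n) K} (hM : IsXMatrix M) (hN : IsXMatrix N) :
    IsXMatrix (M * N) := by
  intro i j h1 h2
  rw [Matrix.mul_apply]
  apply Finset.sum_eq_zero
  intro k _
  by_cases hk1 : k = i
  · subst hk1
    rw [hN k j h1 h2, mul_zero]
  by_cases hk2 : k = i.rev
  · subst hk2
    rw [hN i.rev j (fun h => h2 h.symm) (by rw [Fin.rev_rev]; exact fun h => h1 h.symm),
      mul_zero]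
  · rw [hM i k (fun h => hk1 h.symm) hk2, zero_mul]

lemma isXMatrix_pow {M : Matrix (Fin n) (Fin n) K} (hM : IsXMatrix M) (k : ℕ) :
    IsXMatrix (M ^ k) := by
  induction k with
  | zero => simpa using isXMatrix_one
  | succ k ih => rw [pow_succ]; exact isXMatrix_mul ih hM

lemma isXMatrix_aeval {M : Matrix (Fin n) (Fin n) K} (hM : IsXMatrix M) (p : Polynomial K) :
    IsXMatrix (Polynomial.aeval M p) := by
  induction p using Polynomial.induction_on' with
  | add p q hp hq => rw [map_add]; exact isXMatrix_add hp hq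
  | monomial k a =>
    rw [Polynomial.aeval_monomial]
    have : (algebraMap K (Matrix (Fin n) (Fin n) K)) a * M ^ k = a • M ^ k := by
      rw [Algebra.smul_def]
    rw [this]
    exact isXMatrix_smul (isXMatrix_pow hM k)

end Aux

/-- The inverse of an invertible bi-symmetric X-matrix is a bi-symmetric X-matrix:
`(𝒳ᵇ)ˣ = GL(n, K) ∩ 𝒳ᵇ`. -/
theorem isBiSymXMatrix_inv {n : ℕ} {K : Type*} [Field K]
    (A : Matrix (Fin n) (Fin n) K) (hA : IsBiSymXMatrix A) (hdet : A.det ≠ 0) :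
    IsBiSymXMatrix A⁻¹ ∧ A * A⁻¹ = 1 ∧ A⁻¹ * A = 1 := by
  have hunit : IsUnit A.det := isUnit_iff_ne_zero.mpr hdet
  have hmul : A * A⁻¹ = 1 := Matrix.mul_nonsing_inv A hunit
  have hmul' : A⁻¹ * A = 1 := Matrix.nonsing_inv_mul A hunit
  obtain ⟨hX, hT, hAT⟩ := hA
  -- A⁻¹ is symmetric
  have hsym : A⁻¹ = (A⁻¹)ᵀ := by
    rw [Matrix.transpose_nonsing_inv, ← hT]
  -- A⁻¹ as a polynomial in A, to get the X-matrix property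
  set p := A.charpoly with hp
  have hc0 : p.coeff 0 ≠ 0 := by
    intro h
    apply hdet
    rw [Matrix.det_eq_sign_charpoly_coeff, ← hp, h, mul_zero]
  have hCH : Polynomial.aeval A p = 0 := Matrix.aeval_self_charpoly A
  have hsplit : p.divX * Polynomial.X + Polynomial.C (p.coeff 0) = p :=
    Polynomial.divX_mul_X_add p
  set B : Matrix (Fin n) (Fin n) K :=
    (-(p.coeff 0)⁻¹) • Polynomial.aeval A p.divX with hB
  have hAB : A * B = 1 := by
    have h0 : A * Polynomial.aeval A p.divX + (p.coeff 0) • (1 : Matrix (Fin n) (Fin n) K)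
        = 0 := by
      have h1 := congrArg (Polynomial.aeval A) hsplit
      rw [map_add, _root_.map_mul, Polynomial.aeval_X, hCH, Polynomial.aeval_C,
        Algebra.algebraMap_eq_smul_one] at h1
      have h2 : A * Polynomial.aeval A p.divX = Polynomial.aeval A p.divX * A := by
        rw [show A * Polynomial.aeval A p.divX
            = Polynomial.aeval A (Polynomial.X * p.divX) by
          rw [_root_.map_mul, Polynomial.aeval_X], mul_comm Polynomial.X,
          _root_.map_mul, Polynomial.aeval_X]
      rw [h2]
      exact h1
    have h3 : A * Polynomial.aeval A p.divX = (-(p.coeff 0)) • 1 := by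
      have := eq_neg_of_add_eq_zero_left h0
      rw [this, neg_smul]
    rw [hB, Matrix.mul_smul, h3, smul_smul]
    rw [neg_mul_neg, inv_mul_cancel₀ hc0, one_smul]
  have hinvB : A⁻¹ = B := Matrix.inv_eq_right_inv hAB
  have hXinv : IsXMatrix A⁻¹ := by
    rw [hinvB, hB]
    exact isXMatrix_smul (isXMatrix_aeval hX _)
  -- anti-transpose invariance
  set J : Matrix (Fin n) (Fin n) K := revMat n K with hJ
  have hJJ : J * J = 1 := revMat_mul_revMat
  have hJinv : J⁻¹ = J := Matrix.inv_eq_right_inv hJJ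
  have hconjA : A = J * A * J := by
    conv_lhs => rw [hAT, antiTranspose_eq_s15, ← hT]
  have hconjInv : A⁻¹ = J * A⁻¹ * J := by
    conv_lhs => rw [hconjA, Matrix.mul_inv_rev, Matrix.mul_inv_rev, hJinv, ← mul_assoc]
  have hATinv : A⁻¹ = antiTranspose A⁻¹ := by
    rw [antiTranspose_eq_s15, ← hsym, ← hconjInv]
  exact ⟨⟨hXinv, hsym, hATinv⟩, hmul, hmul'⟩
end

section
/- For every monic polynomial f(t) ∈ ℝ[t] of degree n there exists an n×n X-matrix A with real entries whose characteristic polynomial equals f: det(tI − A) = f(t). -/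
open Matrix Polynomial

/-!
A monic real polynomial of degree `n + 2` factors as a monic quadratic `q` times a monic
polynomial `g` of degree `n`, since real irreducible polynomials have degree at most two.
Realise `q` as the characteristic polynomial of a `2 × 2` matrix `M` and, inductively, `g` as
that of an X-matrix `B`. Putting `M` in the four corners and `B` in the middle gives an X-matrix
which, after moving the first and last index to the front, is block diagonal with blocks `M`
and `B`; so its characteristic polynomial is `q * g`.
-/

section

variable {R : Type*} {n : ℕ}

lemma isXMatrix_of_le_two [Zero R] (hn : n ≤ 2) (A : Matrix (Fin n) (Fin n) R) :
    IsXMatrix A := by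
  intro i j hij hrev
  simp only [ne_eq, Fin.ext_iff, Fin.val_rev] at hij hrev
  omega

lemma exists_charpoly_eq_of_isMonicOfDegree_one [CommRing R] [Nontrivial R] {f : R[X]}
    (hf : IsMonicOfDegree f 1) : ∃ A : Matrix (Fin 1) (Fin 1) R, A.charpoly = f := by
  obtain ⟨r, rfl⟩ := isMonicOfDegree_one_iff.mp hf
  exact ⟨!![-r], by simp [charpoly, charmatrix_apply_eq]⟩

lemma exists_charpoly_eq_of_isMonicOfDegree_two [CommRing R] [Nontrivial R] {f : R[X]}
    (hf : IsMonicOfDegree f 2) : ∃ A : Matrix (Fin 2) (Fin 2) R, A.charpoly = f := by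
  obtain ⟨a, b, rfl⟩ := isMonicOfDegree_two_iff'.mp hf
  exact ⟨!![a, -b; 1, 0], by simp [charpoly_fin_two, trace_fin_two, det_fin_two]⟩

def frameEquiv (n : ℕ) : Fin 2 ⊕ Fin n ≃ Fin (n + 2) where
  toFun := Sum.elim ![0, Fin.last (n + 1)] fun i => i.castSucc.succ
  invFun := Fin.cases (Sum.inl 0) (Fin.lastCases (Sum.inl 1) Sum.inr)
  left_inv := by
    rintro (a | i)
    · fin_cases a
      · rfl
      · simp [← Fin.succ_last]
    · simp
  right_inv k := by
    induction k using Fin.cases with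
    | zero => rfl
    | succ k =>
      induction k using Fin.lastCases with
      | last => simp [← Fin.succ_last]
      | cast i => simp

lemma frameEquiv_map_rev (x : Fin 2 ⊕ Fin n) :
    frameEquiv n (Sum.map Fin.rev Fin.rev x) = (frameEquiv n x).rev := by
  rcases x with a | i
  · fin_cases a <;> simp [frameEquiv]
  · ext
    simp [frameEquiv]
    omega

def frame [Zero R] (M : Matrix (Fin 2) (Fin 2) R) (B : Matrix (Fin n) (Fin n) R) :
    Matrix (Fin (n + 2)) (Fin (n + 2)) R :=
  reindex (frameEquiv n) (frameEquiv n) (fromBlocks M 0 0 B)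

lemma charpoly_frame [CommRing R] (M : Matrix (Fin 2) (Fin 2) R) (B : Matrix (Fin n) (Fin n) R) :
    (frame M B).charpoly = M.charpoly * B.charpoly := by
  rw [frame, charpoly_reindex, charpoly_fromBlocks_zero₁₂]

lemma IsXMatrix.frame [Zero R] {M : Matrix (Fin 2) (Fin 2) R} {B : Matrix (Fin n) (Fin n) R}
    (hM : IsXMatrix M) (hB : IsXMatrix B) : IsXMatrix (frame M B) := by
  intro i j hij hrev
  obtain ⟨x, rfl⟩ := (frameEquiv n).surjective i
  obtain ⟨y, rfl⟩ := (frameEquiv n).surjective j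
  rw [(frameEquiv n).injective.ne_iff] at hij
  rw [← frameEquiv_map_rev, (frameEquiv n).injective.ne_iff] at hrev
  simp only [_root_.frame, reindex_apply, submatrix_apply, Equiv.symm_apply_apply]
  rcases x with a | a <;> rcases y with b | b
  · exact hM a b (by simpa using hij) (by simpa using hrev)
  · rfl
  · rfl
  · exact hB a b (by simpa using hij) (by simpa using hrev)

end

/-- Every monic real polynomial of degree `n` is the characteristic polynomial
`det (t I - A)` of some `n × n` real X-matrix `A`. -/
theorem exists_xMatrix_companion {n : ℕ} (f : Polynomial ℝ)
    (hmonic : f.Monic) (hdeg : f.natDegree = n) :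
    ∃ A : Matrix (Fin n) (Fin n) ℝ, IsXMatrix A ∧ A.charpoly = f := by
  induction n using Nat.twoStepInduction generalizing f with
  | zero =>
    exact ⟨0, isXMatrix_of_le_two (Nat.zero_le 2) 0, by simp [hmonic.natDegree_eq_zero.mp hdeg]⟩
  | one =>
    obtain ⟨A, hA⟩ := exists_charpoly_eq_of_isMonicOfDegree_one ⟨hdeg, hmonic⟩
    exact ⟨A, isXMatrix_of_le_two one_le_two A, hA⟩
  | more n ih _ =>
    obtain ⟨q, g, hq, hg, rfl⟩ :=
      IsMonicOfDegree.eq_isMonicOfDegree_two_mul_isMonicOfDegree ⟨hdeg, hmonic⟩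
    obtain ⟨M, hM⟩ := exists_charpoly_eq_of_isMonicOfDegree_two hq
    obtain ⟨B, hBX, hB⟩ := ih g hg.monic hg.natDegree_eq
    exact ⟨frame M B, (isXMatrix_of_le_two le_rfl M).frame hBX, by rw [charpoly_frame, hM, hB]⟩
end
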